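/- arXiv:1611.07336 — 3 statements merged into one kernel-verified Lean document; each statement's English description precedes it below -/
import Mathlib

section
/- The bivariate generating function H(z,u) = Σ_{n≥0} G_n(z) u^n for inversions satisfies the functional-differential equation (1-z) ∂H/∂u (z,u) = H(z,u) - z·H(z, zu), with H(1,u) = 1/(1-u). -/
def invCount {n : ℕ} (σ : Equiv.Perm (Fin n)) : ℕ :=
  (Finset.univ.filter fun p : Fin n × Fin n => p.1 < p.2 ∧ σ p.2 < σ p.1).card

def invPermCount (n k : ℕ) : ℕ :=
  (Finset.univ.filter fun σ : Equiv.Perm (Fin n) => invCount σ = k).card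

noncomputable def Ginv (n : ℕ) (z : ℝ) : ℝ :=
  ∑ k ∈ Finset.range (n * n + 1), (invPermCount n k : ℝ) * z ^ k / (n.factorial : ℝ)

/-- Insert the largest value at position `p` : the permutation whose word is
the word of `τ` with `n` inserted at position `p`. -/
def insPerm {n : ℕ} (τ : Equiv.Perm (Fin n)) (p : Fin (n+1)) : Equiv.Perm (Fin (n+1)) :=
  (finSuccEquiv' p).trans ((Equiv.optionCongr τ).trans finSuccEquivLast.symm)

lemma insPerm_at {n : ℕ} (τ : Equiv.Perm (Fin n)) (p : Fin (n+1)) :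
    insPerm τ p p = Fin.last n := by
  simp [insPerm, finSuccEquiv'_at]

lemma insPerm_succAbove {n : ℕ} (τ : Equiv.Perm (Fin n)) (p : Fin (n+1)) (i : Fin n) :
    insPerm τ p (p.succAbove i) = (τ i).castSucc := by
  simp [insPerm, finSuccEquiv'_succAbove]

lemma invCount_eq_sum {n : ℕ} (σ : Equiv.Perm (Fin n)) :
    invCount σ = ∑ i : Fin n, ∑ j : Fin n, if i < j ∧ σ j < σ i then 1 else 0 := by
  rw [invCount, Finset.card_filter, Fintype.sum_prod_type]

lemma lt_succAbove {n : ℕ} (p : Fin (n+1)) (j : Fin n) :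
    p < p.succAbove j ↔ p.val ≤ j.val := by
  unfold Fin.succAbove
  split <;> simp_all [Fin.lt_def, Fin.le_def] <;> omega

lemma sum_ite_le (p n : ℕ) : (∑ j ∈ Finset.range n, if p ≤ j then 1 else 0) = n - p := by
  induction n with
  | zero => simp
  | succ n ih => rw [Finset.sum_range_succ, ih]; split <;> omega

lemma invCount_insPerm {n : ℕ} (τ : Equiv.Perm (Fin n)) (p : Fin (n+1)) :
    invCount (insPerm τ p) = (n - p.val) + invCount τ := by
  rw [invCount_eq_sum, invCount_eq_sum τ]
  rw [Fin.sum_univ_succAbove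
    (fun i => ∑ j : Fin (n+1), if i < j ∧ insPerm τ p j < insPerm τ p i then 1 else 0) p]
  have h1 : (∑ j : Fin (n+1), if p < j ∧ insPerm τ p j < insPerm τ p p then 1 else 0)
      = n - p.val := by
    rw [Fin.sum_univ_succAbove
      (fun j => if p < j ∧ insPerm τ p j < insPerm τ p p then 1 else 0) p]
    simp only [lt_irrefl, false_and, if_false, zero_add, insPerm_at, insPerm_succAbove,
      Fin.castSucc_lt_last, and_true, lt_succAbove]
    rw [Fin.sum_univ_eq_sum_range (fun j => if p.val ≤ j then 1 else 0) n]
    exact sum_ite_le p.val n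
  have h2 : ∀ i : Fin n,
      (∑ j : Fin (n+1), if p.succAbove i < j ∧ insPerm τ p j < insPerm τ p (p.succAbove i)
        then 1 else 0)
      = ∑ j : Fin n, if i < j ∧ τ j < τ i then 1 else 0 := by
    intro i
    rw [Fin.sum_univ_succAbove
      (fun j => if p.succAbove i < j ∧ insPerm τ p j < insPerm τ p (p.succAbove i)
        then 1 else 0) p]
    simp [insPerm_at, insPerm_succAbove, Fin.succAbove_lt_succAbove_iff,
      Fin.castSucc_lt_castSucc_iff, (Fin.castSucc_lt_last _).not_gt]
  rw [h1]
  congr 1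
  exact Finset.sum_congr rfl fun i _ => h2 i

noncomputable def Qinv (n : ℕ) (z : ℝ) : ℝ := ∑ σ : Equiv.Perm (Fin n), z ^ invCount σ

lemma insPerm_bijective (n : ℕ) :
    Function.Bijective (fun x : Equiv.Perm (Fin n) × Fin (n+1) => insPerm x.1 x.2) := by
  rw [Fintype.bijective_iff_injective_and_card]
  constructor
  · rintro ⟨τ, p⟩ ⟨τ', p'⟩ h
    simp only at h
    have hp : p = p' := by
      have h1 : insPerm τ' p' p = Fin.last n := by rw [← h, insPerm_at]
      have h2 : insPerm τ' p' p' = Fin.last n := insPerm_at τ' p'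
      exact (insPerm τ' p').injective (h1.trans h2.symm)
    subst hp
    have hτ : τ = τ' := by
      ext i
      have h3 := congrArg (fun σ : Equiv.Perm (Fin (n+1)) => σ (p.succAbove i)) h
      simp only [insPerm_succAbove] at h3
      exact congrArg Fin.val (Fin.castSucc_injective n h3)
    rw [hτ]
  · simp [Fintype.card_perm, Nat.factorial_succ]
    ring

lemma Qinv_succ (n : ℕ) (z : ℝ) :
    Qinv (n+1) z = (∑ j ∈ Finset.range (n+1), z ^ j) * Qinv n z := by
  have hb := Fintype.sum_bijective _ (insPerm_bijective n)
    (fun x : Equiv.Perm (Fin n) × Fin (n+1) => z ^ invCount (insPerm x.1 x.2))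
    (fun σ : Equiv.Perm (Fin (n+1)) => z ^ invCount σ) (fun x => rfl)
  rw [Qinv, ← hb, Fintype.sum_prod_type]
  simp only [invCount_insPerm, pow_add]
  rw [Finset.sum_comm]
  have h3 : ∀ p : Fin (n+1),
      (∑ τ : Equiv.Perm (Fin n), z ^ (n - p.val) * z ^ invCount τ)
        = z ^ (n - p.val) * Qinv n z := fun p => by rw [Qinv, Finset.mul_sum]
  simp only [h3]
  rw [← Finset.sum_mul]
  congr 1
  rw [Fin.sum_univ_eq_sum_range (fun j => z ^ (n - j)) (n+1)]
  calc ∑ p ∈ Finset.range (n+1), z ^ (n - p)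
      = ∑ p ∈ Finset.range (n+1), z ^ (n + 1 - 1 - p) := by simp
    _ = ∑ j ∈ Finset.range (n+1), z ^ j := Finset.sum_range_reflect (fun j => z ^ j) (n+1)

lemma Ginv_eq (n : ℕ) (z : ℝ) : Ginv n z = Qinv n z / (n.factorial : ℝ) := by
  rw [Ginv, Qinv, ← Finset.sum_div]
  congr 1
  have hmap : ∀ σ : Equiv.Perm (Fin n), σ ∈ Finset.univ →
      invCount σ ∈ Finset.range (n * n + 1) := by
    intro σ _
    rw [Finset.mem_range, Nat.lt_succ_iff]
    calc invCount σ ≤ (Finset.univ : Finset (Fin n × Fin n)).card :=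
          Finset.card_filter_le _ _
      _ = n * n := by simp
  rw [← Finset.sum_fiberwise_of_maps_to hmap (fun σ => z ^ invCount σ)]
  refine Finset.sum_congr rfl fun k _ => ?_
  calc (invPermCount n k : ℝ) * z ^ k
      = ∑ _σ ∈ Finset.univ.filter (fun σ : Equiv.Perm (Fin n) => invCount σ = k), z ^ k := by
        rw [Finset.sum_const, invPermCount, nsmul_eq_mul]
    _ = ∑ σ ∈ Finset.univ.filter (fun σ : Equiv.Perm (Fin n) => invCount σ = k),
          z ^ invCount σ := by
        refine Finset.sum_congr rfl fun σ hσ => ?_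
        rw [(Finset.mem_filter.1 hσ).2]

lemma key (n : ℕ) (z : ℝ) :
    (1 - z) * (((n : ℝ) + 1) * Ginv (n+1) z) = Ginv n z - z * (Ginv n z * z ^ n) := by
  have hgeom : (1 - z) * ∑ j ∈ Finset.range (n+1), z ^ j = 1 - z ^ (n+1) := by
    have h := mul_geom_sum z (n+1)
    linarith [h]
  have hF : ((n.factorial : ℝ)) ≠ 0 := Nat.cast_ne_zero.2 (Nat.factorial_ne_zero n)
  have hn1 : ((n : ℝ) + 1) ≠ 0 := by positivity
  have hfs : (((n+1).factorial : ℝ)) = ((n : ℝ) + 1) * (n.factorial : ℝ) := by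
    rw [Nat.factorial_succ]; push_cast; ring
  rw [Ginv_eq, Ginv_eq, Qinv_succ, hfs]
  field_simp
  linear_combination (Qinv n z) * hgeom

lemma Ginv_one (n : ℕ) : Ginv n 1 = 1 := by
  have hF : ((n.factorial : ℝ)) ≠ 0 := Nat.cast_ne_zero.2 (Nat.factorial_ne_zero n)
  rw [Ginv_eq, Qinv]
  simp only [one_pow, Finset.sum_const, Finset.card_univ, Fintype.card_perm,
    Fintype.card_fin, nsmul_eq_mul, mul_one]
  exact div_self hF

open PowerSeries in
theorem stmt11 :
    (∀ z : ℝ,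
      C (1 - z) * (d⁄dX ℝ (mk fun n => Ginv n z))
        = (mk fun n => Ginv n z) - C z * (mk fun n => Ginv n z * z ^ n))
    ∧ (mk fun n => Ginv n 1) = (1 - X : PowerSeries ℝ)⁻¹ := by
  constructor
  · intro z
    ext n
    simp only [coeff_C_mul, coeff_derivative]
    rw [map_sub]
    simp only [coeff_C_mul, coeff_mk]
    linear_combination key n z
  · rw [PowerSeries.eq_inv_iff_mul_eq_one (by simp : constantCoeff (1 - X : PowerSeries ℝ) ≠ 0)]
    ext n
    simp only [mul_sub, mul_one, map_sub, coeff_mk, Ginv_one]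
    cases n with
    | zero => simp
    | succ n => simp [PowerSeries.coeff_succ_mul_X, Ginv_one, coeff_one]
end

section
/- The variance of the number of inversions of a uniformly random permutation of {1,...,n} equals n(n-1)(2n+5)/72. -/
/-!
Writing `σ ∈ S_{n+1}` as `insertLast k e`, with `k = σ (last n)` and `e ∈ S_n` the relative order
of the other values, adds exactly the `n - k` inversions `(i, last n)` to those of `e`. Hence the
inversion count on `S_{n+1}` is, as a function on `Fin (n+1) × S_n`, a sum `f k + g e`; after
centering both summands the cross term of the square vanishes, and the sum of squared deviations
obeys `V (n+1) = (n+1) V n + n! · n (n+1) (n+2) / 12`.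
-/

open Finset Equiv
open scoped Nat

section SumsOfSquares

variable {α β R : Type*} [Fintype α] [Fintype β] [CommSemiring R]

lemma Fintype.sum_sum_add (f : α → R) (g : β → R) :
    ∑ a, ∑ b, (f a + g b) = Fintype.card β * ∑ a, f a + Fintype.card α * ∑ b, g b := by
  simp only [sum_add_distrib, sum_const, card_univ, nsmul_eq_mul, mul_sum]

lemma Fintype.sum_sum_add_sq (f : α → R) (g : β → R) :
    ∑ a, ∑ b, (f a + g b) ^ 2 = Fintype.card β * ∑ a, f a ^ 2
      + 2 * (∑ a, f a) * (∑ b, g b) + Fintype.card α * ∑ b, g b ^ 2 := by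
  simp only [add_sq, sum_add_distrib, sum_const, card_univ, nsmul_eq_mul, mul_sum, sum_mul]
  rw [sum_comm (f := fun a b => 2 * f a * g b)]

end SumsOfSquares

lemma sum_range_sub (c : ℝ) (m : ℕ) :
    ∑ k ∈ range m, (c - k) = m * c - m * (m - 1) / 2 := by
  induction m with
  | zero => simp
  | succ m ih => rw [sum_range_succ, ih]; push_cast; ring

lemma sum_range_sub_sq (c : ℝ) (m : ℕ) :
    ∑ k ∈ range m, (c - k) ^ 2
      = m * c ^ 2 - c * m * (m - 1) + m * (m - 1) * (2 * m - 1) / 6 := by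
  induction m with
  | zero => simp
  | succ m ih => rw [sum_range_succ, ih]; push_cast; ring

lemma sum_fin_half_sub (n : ℕ) : ∑ k : Fin (n + 1), ((n : ℝ) / 2 - k) = 0 := by
  rw [Fin.sum_univ_eq_sum_range (fun k => (n : ℝ) / 2 - k), sum_range_sub]
  push_cast; ring

lemma sum_fin_half_sub_sq (n : ℕ) :
    ∑ k : Fin (n + 1), ((n : ℝ) / 2 - k) ^ 2 = (n : ℝ) * (n + 1) * (n + 2) / 12 := by
  rw [Fin.sum_univ_eq_sum_range (fun k => ((n : ℝ) / 2 - k) ^ 2), sum_range_sub_sq]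
  push_cast; ring

namespace Equiv.Perm

variable {n : ℕ}

def insertLast (k : Fin (n + 1)) (e : Perm (Fin n)) : Perm (Fin (n + 1)) :=
  (finSuccEquivLast.trans (optionCongr e)).trans (finSuccEquiv' k).symm

@[simp] lemma insertLast_castSucc (k : Fin (n + 1)) (e : Perm (Fin n)) (i : Fin n) :
    insertLast k e i.castSucc = k.succAbove (e i) := by
  simp [insertLast]

@[simp] lemma insertLast_last (k : Fin (n + 1)) (e : Perm (Fin n)) :
    insertLast k e (Fin.last n) = k := by
  simp [insertLast]

lemma insertLast_injective :
    Function.Injective (fun p : Fin (n + 1) × Perm (Fin n) => insertLast p.1 p.2) := by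
  rintro ⟨k, e⟩ ⟨k', e'⟩ h
  obtain rfl : k = k' := by simpa using congr($h (Fin.last n))
  obtain rfl : e = e' := Equiv.ext fun i => by simpa using congr($h i.castSucc)
  rfl

noncomputable def insertLastEquiv : Fin (n + 1) × Perm (Fin n) ≃ Perm (Fin (n + 1)) :=
  .ofBijective _ <| (Fintype.bijective_iff_injective_and_card _).2
    ⟨insertLast_injective, by simp [Fintype.card_perm, Nat.factorial_succ]⟩

lemma sum_perm_succ {M : Type*} [AddCommMonoid M] (f : Perm (Fin (n + 1)) → M) :
    ∑ σ, f σ = ∑ k, ∑ e, f (insertLast k e) := by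
  rw [← Fintype.sum_prod_type']
  exact (Fintype.sum_equiv insertLastEquiv _ _ fun _ => rfl).symm

end Equiv.Perm

open Equiv.Perm

section Inversions

variable {n : ℕ}

lemma invCount_eq_sum_card (σ : Perm (Fin n)) :
    invCount σ = ∑ j, #{i | i < j ∧ σ j < σ i} := by
  simp only [invCount, card_filter, Fintype.sum_prod_type]
  exact sum_comm

lemma card_inversions_last (σ : Perm (Fin (n + 1))) :
    #{i | i < Fin.last n ∧ σ (Fin.last n) < σ i} = n - σ (Fin.last n) := by
  have lt_last : ∀ i, σ (Fin.last n) < σ i → i < Fin.last n := fun i h =>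
    lt_of_le_of_ne (Fin.le_last i) (by rintro rfl; exact h.false)
  calc #{i | i < Fin.last n ∧ σ (Fin.last n) < σ i}
      = #{i | σ (Fin.last n) < σ i} := by
        congr 1; exact filter_congr fun i _ => ⟨And.right, fun h => ⟨lt_last i h, h⟩⟩
    _ = #(Ioi (σ (Fin.last n))) := by
        rw [card_filter, Equiv.sum_comp σ (fun j => if σ (Fin.last n) < j then 1 else 0),
          ← card_filter, filter_lt_eq_Ioi]
    _ = n - σ (Fin.last n) := by simp

lemma card_inversions_insertLast_castSucc (k : Fin (n + 1)) (e : Perm (Fin n)) (j : Fin n) :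
    #{i | i < j.castSucc ∧ insertLast k e j.castSucc < insertLast k e i}
      = #{i | i < j ∧ e j < e i} := by
  rw [card_filter, card_filter, Fin.sum_univ_castSucc]
  simp [(Fin.castSucc_lt_last j).not_gt]

lemma invCount_insertLast (k : Fin (n + 1)) (e : Perm (Fin n)) :
    invCount (insertLast k e) = invCount e + (n - k) := by
  rw [invCount_eq_sum_card, Fin.sum_univ_castSucc, card_inversions_last, insertLast_last,
    invCount_eq_sum_card]
  simp only [card_inversions_insertLast_castSucc]

lemma invCount_insertLast_sub_mean (k : Fin (n + 1)) (e : Perm (Fin n)) :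
    (invCount (insertLast k e) : ℝ) - ((n + 1 : ℕ) : ℝ) * (((n + 1 : ℕ) : ℝ) - 1) / 4
      = ((n : ℝ) / 2 - k) + ((invCount e : ℝ) - n * (n - 1) / 4) := by
  rw [invCount_insertLast, Nat.cast_add, Nat.cast_sub (Nat.lt_succ_iff.mp k.isLt)]
  push_cast
  ring

end Inversions

lemma sum_invCount_sub_mean (n : ℕ) :
    ∑ σ : Perm (Fin n), ((invCount σ : ℝ) - n * (n - 1) / 4) = 0 := by
  induction n with
  | zero => simp [invCount]
  | succ n ih =>
    rw [sum_perm_succ]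
    simp only [invCount_insertLast_sub_mean, Fintype.sum_sum_add, sum_fin_half_sub, ih]
    ring

lemma sum_sq_invCount_sub_mean (n : ℕ) :
    ∑ σ : Perm (Fin n), ((invCount σ : ℝ) - n * (n - 1) / 4) ^ 2
      = (n ! : ℝ) * ((n : ℝ) * (n - 1) * (2 * n + 5) / 72) := by
  induction n with
  | zero => simp [invCount]
  | succ n ih =>
    rw [sum_perm_succ]
    simp only [invCount_insertLast_sub_mean, Fintype.sum_sum_add_sq, sum_fin_half_sub_sq,
      sum_fin_half_sub, sum_invCount_sub_mean, ih, Fintype.card_perm, Fintype.card_fin,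
      Nat.factorial_succ]
    push_cast
    ring

theorem stmt13 (n : ℕ) :
    (∑ σ : Equiv.Perm (Fin n), ((invCount σ : ℝ) - n * (n - 1) / 4) ^ 2) / (n.factorial : ℝ)
      = n * (n - 1) * (2 * n + 5) / 72 := by
  rw [sum_sq_invCount_sub_mean, mul_div_cancel_left₀ _ (mod_cast n.factorial_ne_zero)]
end

section
/- The bivariate generating function H(z,u) = Σ_{n≥0} G_n(z) u^n for quicksort comparison counts satisfies ∂H/∂u (z,u) = H(z,zu)^2, with H(1,u) = 1/(1-u). -/
def qsortComparisons : List ℕ → ℕ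
  | [] => 0
  | x :: xs =>
      xs.length + qsortComparisons (xs.filter fun y => decide (y < x))
        + qsortComparisons (xs.filter fun y => decide (x < y))
termination_by l => l.length
decreasing_by
  all_goals simp_wf
  all_goals exact (List.length_filter_le _ _).trans (by simp)

def qsortPermCount (n k : ℕ) : ℕ :=
  (Finset.univ.filter fun σ : Equiv.Perm (Fin n) =>
    qsortComparisons (List.ofFn fun i => ((σ i : ℕ))) = k).card

noncomputable def Gq (n : ℕ) (z : ℝ) : ℝ :=
  ∑ k ∈ Finset.range (n * n + 1), (qsortPermCount n k : ℝ) * z ^ k / (n.factorial : ℝ)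

namespace QsAux

lemma qc_nil : qsortComparisons [] = 0 := by rw [qsortComparisons]

lemma qc_cons (x : ℕ) (xs : List ℕ) :
    qsortComparisons (x :: xs) =
      xs.length + qsortComparisons (xs.filter fun y => decide (y < x))
        + qsortComparisons (xs.filter fun y => decide (x < y)) := by
  rw [qsortComparisons]

lemma filter_add_filter_le (p q : ℕ → Bool) (h : ∀ y, ¬(p y = true ∧ q y = true))
    (l : List ℕ) : (l.filter p).length + (l.filter q).length ≤ l.length := by
  induction l with
  | nil => simp
  | cons a l ih =>
    simp only [List.filter_cons]
    cases hp : p a <;> cases hq : q a <;> simp_all <;> omega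

lemma qc_le_sq : ∀ l : List ℕ, qsortComparisons l ≤ l.length ^ 2
  | [] => by simp [qc_nil]
  | x :: xs => by
    rw [qc_cons]
    have h1 := qc_le_sq (xs.filter fun y => decide (y < x))
    have h2 := qc_le_sq (xs.filter fun y => decide (x < y))
    have h3 := filter_add_filter_le (fun y => decide (y < x)) (fun y => decide (x < y))
      (fun y => by simp; omega) xs
    have hx1 : ((xs.filter fun y => decide (y < x)).length : ℕ) ≤ xs.length :=
      List.length_filter_le _ _
    simp only [List.length_cons]
    nlinarith [List.length_filter_le (fun y => decide (y < x)) xs]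
termination_by l => l.length
decreasing_by
  all_goals simp_wf
  all_goals exact (List.length_filter_le _ _).trans (by simp)

/-- interleave according to a boolean mask -/
def itl : List Bool → List ℕ → List ℕ → List ℕ
  | [], _, _ => []
  | true :: bs, xs, ys =>
      match xs with
      | [] => []
      | x :: xs => x :: itl bs xs ys
  | false :: bs, xs, ys =>
      match ys with
      | [] => []
      | y :: ys => y :: itl bs xs ys

lemma itl_self (p : ℕ → Bool) : ∀ l : List ℕ,
    itl (l.map p) (l.filter p) (l.filter fun y => !p y) = l := by
  intro l
  induction l with
  | nil => rfl
  | cons a l ih =>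
    cases hp : p a <;> simp [List.filter_cons, hp, itl, ih]

lemma count_true_add_count_false (bs : List Bool) :
    bs.count true + bs.count false = bs.length := by
  induction bs with
  | nil => rfl
  | cons b bs ih => cases b <;> simp [List.count_cons] <;> omega

lemma itl_perm : ∀ (bs : List Bool) (xs ys : List ℕ),
    bs.count true = xs.length → bs.count false = ys.length →
    (itl bs xs ys).Perm (xs ++ ys)
  | [], xs, ys, ht, hf => by
    cases xs
    · cases ys
      · simp [itl]
      · simp at hf
    · simp at ht
  | true :: bs, xs, ys, ht, hf => by
    cases xs with
    | nil => simp at ht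
    | cons x xs =>
      simp [List.count_cons] at ht hf
      simp only [itl, List.cons_append]
      exact (itl_perm bs xs ys (by omega) (by omega)).cons x
  | false :: bs, xs, ys, ht, hf => by
    cases ys with
    | nil => simp at hf
    | cons y ys =>
      simp [List.count_cons] at ht hf
      have h := itl_perm bs xs ys (by omega) (by omega)
      simp only [itl]
      exact (h.cons y).trans List.perm_middle.symm

lemma itl_recover (p : ℕ → Bool) : ∀ (bs : List Bool) (xs ys : List ℕ),
    bs.count true = xs.length → bs.count false = ys.length →
    (∀ x ∈ xs, p x = true) → (∀ y ∈ ys, p y = false) →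
    (itl bs xs ys).map p = bs ∧ (itl bs xs ys).filter p = xs ∧
      (itl bs xs ys).filter (fun y => !p y) = ys
  | [], xs, ys, ht, hf, _, _ => by
    cases xs
    · cases ys
      · simp [itl]
      · simp at hf
    · simp at ht
  | true :: bs, xs, ys, ht, hf, hx, hy => by
    cases xs with
    | nil => simp at ht
    | cons x xs =>
      simp [List.count_cons] at ht hf
      have hpx : p x = true := hx x (by simp)
      obtain ⟨h1, h2, h3⟩ := itl_recover p bs xs ys (by omega) (by omega)
        (fun a ha => hx a (by simp [ha])) hy
      simp [itl, List.filter_cons, hpx, h1, h2, h3]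
  | false :: bs, xs, ys, ht, hf, hx, hy => by
    cases ys with
    | nil => simp at hf
    | cons y ys =>
      simp [List.count_cons] at ht hf
      have hpy : p y = false := hy y (by simp)
      obtain ⟨h1, h2, h3⟩ := itl_recover p bs xs ys (by omega) (by omega)
        hx (fun a ha => hy a (by simp [ha]))
      simp [itl, List.filter_cons, hpy, h1, h2, h3]

/-- boolean masks of length `m` with `i` trues -/
def masks : ℕ → ℕ → Finset (List Bool)
  | 0, 0 => {[]}
  | 0, _ + 1 => ∅
  | m + 1, 0 => (masks m 0).image (false :: ·)
  | m + 1, i + 1 => (masks m (i + 1)).image (false :: ·) ∪ (masks m i).image (true :: ·)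

lemma mem_masks : ∀ (m i : ℕ) (bs : List Bool),
    bs ∈ masks m i ↔ bs.length = m ∧ bs.count true = i
  | 0, 0, bs => by cases bs <;> simp [masks]
  | 0, i + 1, bs => by
    simp only [masks, Finset.notMem_empty, false_iff]
    rintro ⟨h1, h2⟩
    rw [List.length_eq_zero_iff] at h1; subst h1; simp at h2
  | m + 1, 0, bs => by
    cases bs with
    | nil => simp [masks]
    | cons b bs =>
      cases b <;> simp [masks, mem_masks m 0, List.count_cons]
  | m + 1, i + 1, bs => by
    cases bs with
    | nil => simp [masks]
    | cons b bs =>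
      cases b <;>
        simp [masks, mem_masks m (i + 1), mem_masks m i, List.count_cons]

lemma card_masks : ∀ m i : ℕ, (masks m i).card = m.choose i
  | 0, 0 => by simp [masks]
  | 0, _ + 1 => by simp [masks]
  | m + 1, 0 => by
    rw [masks, Finset.card_image_of_injective _ (fun a b h => by simpa using h),
      card_masks m 0]
    simp
  | m + 1, i + 1 => by
    have hdisj : Disjoint ((masks m (i + 1)).image (false :: ·))
        ((masks m i).image (true :: ·)) := by
      rw [Finset.disjoint_left]
      rintro a ha hb
      simp only [Finset.mem_image] at ha hb
      obtain ⟨x, -, rfl⟩ := ha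
      obtain ⟨y, -, h⟩ := hb
      simp at h
    rw [masks, Finset.card_union_of_disjoint hdisj, Finset.card_image_of_injective _
      (fun a b h => by simpa using h), Finset.card_image_of_injective _
      (fun a b h => by simpa using h), card_masks m (i + 1), card_masks m i,
      Nat.choose_succ_succ]
    simp [Nat.succ_eq_add_one]
    omega


/-- the finset of linear orderings (as lists) of a finset of naturals -/
def perms (s : Finset ℕ) : Finset (List ℕ) :=
  ⟨((s.sort (· ≤ ·)).permutations : Multiset (List ℕ)),
    by exact_mod_cast List.nodup_permutations _ (Finset.sort_nodup s _)⟩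

lemma mem_perms {s : Finset ℕ} {l : List ℕ} :
    l ∈ perms s ↔ l.Nodup ∧ ∀ a, a ∈ l ↔ a ∈ s := by
  have h : l ∈ perms s ↔ l.Perm (s.sort (· ≤ ·)) := by
    simp [perms, Finset.mem_mk, List.mem_permutations]
  rw [h]
  constructor
  · intro hp
    refine ⟨hp.nodup_iff.2 (Finset.sort_nodup s _), fun a => (hp.mem_iff).trans ?_⟩
    exact Finset.mem_sort _
  · rintro ⟨h1, h2⟩
    exact (List.perm_ext_iff_of_nodup h1 (Finset.sort_nodup s _)).2
      fun a => (h2 a).trans (Finset.mem_sort _).symm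

lemma length_of_mem_perms {s : Finset ℕ} {l : List ℕ} (h : l ∈ perms s) :
    l.length = s.card := by
  have hp : l.Perm (s.sort (· ≤ ·)) := by
    simpa [perms, Finset.mem_mk, List.mem_permutations] using h
  rw [hp.length_eq, Finset.length_sort]

noncomputable def Fs (z : ℝ) (s : Finset ℕ) : ℝ :=
  ∑ l ∈ perms s, z ^ qsortComparisons l

/-- quicksort comparison count is invariant under maps strictly monotone on the elements -/
lemma qc_map (g : ℕ → ℕ) (S : Set ℕ) (hg : StrictMonoOn g S) :
    ∀ l : List ℕ, (∀ x ∈ l, x ∈ S) → qsortComparisons (l.map g) = qsortComparisons l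
  | [], _ => rfl
  | x :: xs, hS => by
    have hxS : x ∈ S := hS x (by simp)
    have hfil : ∀ (q : ℕ → ℕ → Bool) , True := fun _ => trivial
    have h1 : (xs.map g).filter (fun y => decide (y < g x))
        = (xs.filter fun y => decide (y < x)).map g := by
      rw [List.filter_map]
      congr 1
      refine List.filter_congr fun a ha => ?_
      simp only [Function.comp_apply, decide_eq_decide]
      exact hg.lt_iff_lt (hS a (by simp [ha])) hxS
    have h2 : (xs.map g).filter (fun y => decide (g x < y))
        = (xs.filter fun y => decide (x < y)).map g := by
      rw [List.filter_map]
      congr 1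
      refine List.filter_congr fun a ha => ?_
      simp only [Function.comp_apply, decide_eq_decide]
      exact hg.lt_iff_lt hxS (hS a (by simp [ha]))
    rw [List.map_cons, qc_cons, qc_cons, h1, h2, List.length_map,
      qc_map g S hg (xs.filter fun y => decide (y < x))
        (fun a ha => hS a (by simp [(List.mem_filter.1 ha).1])),
      qc_map g S hg (xs.filter fun y => decide (x < y))
        (fun a ha => hS a (by simp [(List.mem_filter.1 ha).1]))]
termination_by l => l.length
decreasing_by
  all_goals simp_wf
  all_goals exact (List.length_filter_le _ _).trans (by simp)

/-- `Fs` depends only on the cardinality -/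
lemma Fs_card_eq (z : ℝ) (s t : Finset ℕ) (h : s.card = t.card) : Fs z s = Fs z t := by
  set n := s.card with hn
  have ht : t.card = n := h.symm
  set e1 := s.orderIsoOfFin hn.symm with he1
  set e2 := t.orderIsoOfFin ht with he2
  set g : ℕ → ℕ := fun a => if ha : a ∈ s then (e2 (e1.symm ⟨a, ha⟩) : ℕ) else 0 with hg
  set g' : ℕ → ℕ := fun a => if ha : a ∈ t then (e1 (e2.symm ⟨a, ha⟩) : ℕ) else 0 with hg'
  have hgs : ∀ a (ha : a ∈ s), g a = (e2 (e1.symm ⟨a, ha⟩) : ℕ) := fun a ha => dif_pos ha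
  have hgt : ∀ a (ha : a ∈ t), g' a = (e1 (e2.symm ⟨a, ha⟩) : ℕ) := fun a ha => dif_pos ha
  have hgmem : ∀ a ∈ s, g a ∈ t := fun a ha => by rw [hgs a ha]; exact (e2 _).2
  have hg'mem : ∀ a ∈ t, g' a ∈ s := fun a ha => by rw [hgt a ha]; exact (e1 _).2
  have hgg' : ∀ a ∈ s, g' (g a) = a := by
    intro a ha
    have hm := hgmem a ha
    rw [hgs a ha] at hm
    rw [hgs a ha, hgt _ hm]
    simp
  have hg'g : ∀ a ∈ t, g (g' a) = a := by
    intro a ha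
    have hm := hg'mem a ha
    rw [hgt a ha] at hm
    rw [hgt a ha, hgs _ hm]
    simp
  have hmono : StrictMonoOn g ↑s := by
    intro a ha b hb hab
    simp only [Finset.mem_coe] at ha hb
    rw [hgs a ha, hgs b hb]
    have : (⟨a, ha⟩ : {x // x ∈ s}) < ⟨b, hb⟩ := hab
    exact_mod_cast e2.strictMono (e1.symm.strictMono this)
  have hmono' : StrictMonoOn g' ↑t := by
    intro a ha b hb hab
    simp only [Finset.mem_coe] at ha hb
    rw [hgt a ha, hgt b hb]
    have : (⟨a, ha⟩ : {x // x ∈ t}) < ⟨b, hb⟩ := hab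
    exact_mod_cast e1.strictMono (e2.symm.strictMono this)
  unfold Fs
  refine Finset.sum_nbij' (fun l => l.map g) (fun l => l.map g') ?_ ?_ ?_ ?_ ?_
  · intro l hl
    rw [mem_perms] at hl ⊢
    refine ⟨hl.1.map_on (fun a ha b hb hab => ?_), fun a => ?_⟩
    · exact hmono.injOn (by simpa using (hl.2 a).1 ha) (by simpa using (hl.2 b).1 hb) hab
    · simp only [List.mem_map]
      constructor
      · rintro ⟨b, hb, rfl⟩
        exact hgmem b ((hl.2 b).1 hb)
      · intro ha
        exact ⟨g' a, (hl.2 _).2 (hg'mem a ha), hg'g a ha⟩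
  · intro l hl
    rw [mem_perms] at hl ⊢
    refine ⟨hl.1.map_on (fun a ha b hb hab => ?_), fun a => ?_⟩
    · exact hmono'.injOn (by simpa using (hl.2 a).1 ha) (by simpa using (hl.2 b).1 hb) hab
    · simp only [List.mem_map]
      constructor
      · rintro ⟨b, hb, rfl⟩
        exact hg'mem b ((hl.2 b).1 hb)
      · intro ha
        exact ⟨g a, (hl.2 _).2 (hgmem a ha), hgg' a ha⟩
  · intro l hl
    rw [mem_perms] at hl
    show (l.map g).map g' = l
    rw [List.map_map]
    exact List.map_congr_left (fun a ha => hgg' a ((hl.2 a).1 ha)) |>.trans (List.map_id l)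
  · intro l hl
    rw [mem_perms] at hl
    show (l.map g').map g = l
    rw [List.map_map]
    exact List.map_congr_left (fun a ha => hg'g a ((hl.2 a).1 ha)) |>.trans (List.map_id l)
  · intro l hl
    rw [mem_perms] at hl
    rw [qc_map g ↑s hmono l (fun a ha => (hl.2 a).1 ha)]


lemma Fs_head (z : ℝ) (s : Finset ℕ) (hs : s.Nonempty) :
    Fs z s = ∑ v ∈ s, ∑ rest ∈ perms (s.erase v), z ^ qsortComparisons (v :: rest) := by
  unfold Fs
  rw [← Finset.sum_sigma s (fun v => perms (s.erase v))
    (fun p => z ^ qsortComparisons (p.1 :: p.2))]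
  refine Finset.sum_nbij' (fun l => (⟨l.headI, l.tail⟩ : Σ _v : ℕ, List ℕ))
    (fun p => p.1 :: p.2) ?_ ?_ ?_ ?_ ?_
  · intro l hl
    rw [mem_perms] at hl
    cases l with
    | nil =>
      obtain ⟨v, hv⟩ := hs
      exact absurd ((hl.2 v).2 hv) List.not_mem_nil
    | cons x xs =>
      show (⟨x, xs⟩ : Σ _v : ℕ, List ℕ) ∈ s.sigma fun v => perms (s.erase v)
      rw [Finset.mem_sigma]
      constructor
      · exact (hl.2 x).1 (by simp)
      · show xs ∈ perms (s.erase x)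
        rw [mem_perms]
        refine ⟨(List.nodup_cons.1 hl.1).2, fun a => ?_⟩
        rw [Finset.mem_erase]
        constructor
        · intro ha
          refine ⟨fun h => (List.nodup_cons.1 hl.1).1 (h ▸ ha), (hl.2 a).1 (by simp [ha])⟩
        · rintro ⟨hne, hm⟩
          rcases (List.mem_cons).1 ((hl.2 a).2 hm) with h | h
          · exact absurd h hne
          · exact h
  · rintro ⟨v, rest⟩ hp
    rw [Finset.mem_sigma] at hp
    obtain ⟨hv, hrest⟩ := hp
    rw [mem_perms] at hrest ⊢
    have hvrest : v ∉ rest := fun h => by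
      have := (hrest.2 v).1 h
      simp [Finset.mem_erase] at this
    refine ⟨List.nodup_cons.2 ⟨hvrest, hrest.1⟩, fun a => ?_⟩
    rw [List.mem_cons]
    constructor
    · rintro (rfl | h)
      · exact hv
      · exact Finset.mem_of_mem_erase ((hrest.2 a).1 h)
    · intro ha
      by_cases hav : a = v
      · exact Or.inl hav
      · exact Or.inr ((hrest.2 a).2 (Finset.mem_erase.2 ⟨hav, ha⟩))
  · intro l hl
    rw [mem_perms] at hl
    cases l with
    | nil =>
      obtain ⟨v, hv⟩ := hs
      exact absurd ((hl.2 v).2 hv) List.not_mem_nil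
    | cons x xs => rfl
  · rintro ⟨v, rest⟩ _; rfl
  · intro l hl
    rw [mem_perms] at hl
    cases l with
    | nil =>
      obtain ⟨v, hv⟩ := hs
      exact absurd ((hl.2 v).2 hv) List.not_mem_nil
    | cons x xs => rfl

lemma inner_sum (z : ℝ) (v : ℕ) (t : Finset ℕ) :
    ∑ rest ∈ perms t,
      z ^ (qsortComparisons (rest.filter fun y => decide (y < v)) +
        qsortComparisons (rest.filter fun y => !decide (y < v)))
    = ((t.card.choose (t.filter fun y => y < v).card : ℕ) : ℝ)
        * Fs z (t.filter fun y => y < v) * Fs z (t.filter fun y => ¬ y < v) := by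
  set p : ℕ → Bool := fun y => decide (y < v) with hp
  set t₁ := t.filter fun y => y < v with ht₁
  set t₂ := t.filter fun y => ¬ y < v with ht₂
  set m := t.card with hm
  set i := t₁.card with hi
  have hsub : t₁ ⊆ t := Finset.filter_subset _ _
  have hile : i ≤ m := Finset.card_le_card hsub
  have ht2card : t₂.card = m - i := by
    have hnot : t₂ = t \ t₁ := by
      ext a
      simp only [ht₁, ht₂, Finset.mem_filter, Finset.mem_sdiff]
      tauto
    rw [hnot, Finset.card_sdiff_of_subset hsub]
  -- LHS equals sum over triples
  have key : ∑ rest ∈ perms t,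
      z ^ (qsortComparisons (rest.filter p) + qsortComparisons (rest.filter fun y => !p y))
      = ∑ q ∈ (masks m i) ×ˢ (perms t₁ ×ˢ perms t₂),
          z ^ (qsortComparisons q.2.1 + qsortComparisons q.2.2) := by
    refine Finset.sum_nbij' (fun l => (l.map p, (l.filter p, l.filter fun y => !p y)))
      (fun q => itl q.1 q.2.1 q.2.2) ?_ ?_ ?_ ?_ ?_
    · intro l hl
      have hlen : l.length = m := length_of_mem_perms hl
      rw [mem_perms] at hl
      have hf1 : l.filter p ∈ perms t₁ := by
        rw [mem_perms]
        refine ⟨hl.1.filter p, fun a => ?_⟩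
        rw [List.mem_filter, ht₁, Finset.mem_filter, hl.2 a, hp]
        simp
      have hf2 : (l.filter fun y => !p y) ∈ perms t₂ := by
        rw [mem_perms]
        refine ⟨hl.1.filter _, fun a => ?_⟩
        rw [List.mem_filter, ht₂, Finset.mem_filter, hl.2 a, hp]
        simp
      rw [Finset.mem_product, Finset.mem_product]
      refine ⟨?_, hf1, hf2⟩
      rw [mem_masks]
      constructor
      · rw [List.length_map, hlen]
      · rw [List.count_eq_countP, List.countP_map]
        have : List.countP ((fun x => x == true) ∘ p) l = List.countP p l :=
          List.countP_congr (fun a _ => by cases hpa : p a <;> simp [hpa])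
        rw [this, List.countP_eq_length_filter, length_of_mem_perms hf1]
    · rintro ⟨bs, l₁, l₂⟩ hq
      rw [Finset.mem_product, Finset.mem_product] at hq
      obtain ⟨hbs, h1, h2⟩ := hq
      rw [mem_masks] at hbs
      dsimp only at hbs h1 h2 ⊢
      have hc1 : bs.count true = l₁.length := by
        rw [hbs.2, length_of_mem_perms h1]
      have hc2 : bs.count false = l₂.length := by
        have h3 := count_true_add_count_false bs
        have h4 := length_of_mem_perms h2
        rw [ht2card] at h4
        omega
      have hperm := itl_perm bs l₁ l₂ hc1 hc2
      rw [mem_perms] at h1 h2 ⊢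
      have hd : List.Disjoint l₁ l₂ := by
        intro a ha1 ha2
        have q1 := (h1.2 a).1 ha1
        have q2 := (h2.2 a).1 ha2
        rw [Finset.mem_filter] at q1 q2
        exact q2.2 q1.2
      refine ⟨hperm.nodup_iff.2 (List.Nodup.append h1.1 h2.1 hd), fun a => ?_⟩
      rw [hperm.mem_iff, List.mem_append, h1.2 a, h2.2 a, ht₁, ht₂,
        Finset.mem_filter, Finset.mem_filter]
      constructor
      · rintro (h | h) <;> exact h.1
      · intro ha
        by_cases hav : a < v
        · exact Or.inl ⟨ha, hav⟩
        · exact Or.inr ⟨ha, hav⟩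
    · intro l _
      exact itl_self p l
    · rintro ⟨bs, l₁, l₂⟩ hq
      rw [Finset.mem_product, Finset.mem_product] at hq
      obtain ⟨hbs, h1, h2⟩ := hq
      rw [mem_masks] at hbs
      dsimp only at hbs h1 h2 ⊢
      have hc1 : bs.count true = l₁.length := by
        rw [hbs.2, length_of_mem_perms h1]
      have hc2 : bs.count false = l₂.length := by
        have h3 := count_true_add_count_false bs
        have h4 := length_of_mem_perms h2
        rw [ht2card] at h4
        omega
      have hx : ∀ x ∈ l₁, p x = true := by
        intro x hx
        have := ((mem_perms.1 h1).2 x).1 hx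
        rw [ht₁, Finset.mem_filter] at this
        simpa [hp] using this.2
      have hy : ∀ y ∈ l₂, p y = false := by
        intro y hy
        have := ((mem_perms.1 h2).2 y).1 hy
        rw [ht₂, Finset.mem_filter] at this
        simpa [hp] using this.2
      obtain ⟨e1, e2, e3⟩ := itl_recover p bs l₁ l₂ hc1 hc2 hx hy
      simp only [e1, e2, e3]
    · intro l _; rfl
  rw [key]
  simp only [Finset.sum_product]
  simp only [pow_add]
  have hinner : ∀ bs ∈ masks m i,
      (∑ l₁ ∈ perms t₁, ∑ l₂ ∈ perms t₂, z ^ qsortComparisons l₁ * z ^ qsortComparisons l₂)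
        = Fs z t₁ * Fs z t₂ := by
    intro bs _
    rw [Fs, Fs, Finset.sum_mul_sum]
  rw [Finset.sum_congr rfl hinner, Finset.sum_const, card_masks, nsmul_eq_mul, mul_assoc]


lemma Fs_range_succ (z : ℝ) (n : ℕ) :
    Fs z (Finset.range (n + 1)) =
      ∑ v ∈ Finset.range (n + 1),
        z ^ n * ((n.choose v : ℝ) * Fs z (Finset.range v) * Fs z (Finset.range (n - v))) := by
  rw [Fs_head z _ (Finset.nonempty_range_iff.2 (Nat.succ_ne_zero n))]
  refine Finset.sum_congr rfl fun v hv => ?_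
  rw [Finset.mem_range] at hv
  set t := (Finset.range (n + 1)).erase v with htdef
  have htcard : t.card = n := by
    rw [htdef, Finset.card_erase_of_mem (Finset.mem_range.2 hv), Finset.card_range]
    omega
  have step : ∀ rest ∈ perms t, z ^ qsortComparisons (v :: rest)
      = z ^ n * z ^ (qsortComparisons (rest.filter fun y => decide (y < v)) +
          qsortComparisons (rest.filter fun y => !decide (y < v))) := by
    intro rest hrest
    have hlen : rest.length = n := by rw [length_of_mem_perms hrest, htcard]
    have hfc : (rest.filter fun y => decide (v < y)) = rest.filter fun y => !decide (y < v) := by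
      refine List.filter_congr fun a ha => ?_
      have hat : a ∈ t := ((mem_perms.1 hrest).2 a).1 ha
      have hane : a ≠ v := (Finset.mem_erase.1 hat).1
      rcases Nat.lt_trichotomy a v with h | h | h
      · simp [h, Nat.lt_asymm h]
      · exact absurd h hane
      · simp [h, Nat.lt_asymm h]
    rw [qc_cons, hlen, hfc, Nat.add_assoc, pow_add]
  rw [Finset.sum_congr rfl step, ← Finset.mul_sum, inner_sum z v t]
  have ht1 : t.filter (fun y => y < v) = Finset.range v := by
    ext a
    simp only [htdef, Finset.mem_filter, Finset.mem_erase, Finset.mem_range]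
    omega
  have ht2 : t.filter (fun y => ¬ y < v) = Finset.Ioc v n := by
    ext a
    simp only [htdef, Finset.mem_filter, Finset.mem_erase, Finset.mem_range, Finset.mem_Ioc]
    omega
  rw [ht1, ht2, htcard, Finset.card_range,
    Fs_card_eq z (Finset.Ioc v n) (Finset.range (n - v))
      (by rw [Nat.card_Ioc, Finset.card_range])]

lemma sum_perm (z : ℝ) (n : ℕ) :
    ∑ σ : Equiv.Perm (Fin n), z ^ qsortComparisons (List.ofFn fun i => ((σ i : ℕ)))
      = Fs z (Finset.range n) := by
  rw [Fs]
  refine Finset.sum_bij (fun σ _ => List.ofFn fun i => ((σ i : ℕ))) ?_ ?_ ?_ ?_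
  · intro σ _
    rw [mem_perms]
    constructor
    · exact List.nodup_ofFn.2 (Fin.val_injective.comp σ.injective)
    · intro a
      simp only [List.mem_ofFn, Set.mem_range, Finset.mem_range]
      constructor
      · rintro ⟨i, rfl⟩; exact (σ i).2
      · intro ha; exact ⟨σ.symm ⟨a, ha⟩, by simp⟩
  · intro σ _ τ _ h
    have h2 : (fun i => ((σ i : ℕ))) = fun i => ((τ i : ℕ)) := List.ofFn_injective h
    refine Equiv.ext fun i => Fin.ext ?_
    exact congrFun h2 i
  · intro l hl
    have hlen : l.length = n := by rw [length_of_mem_perms hl, Finset.card_range]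
    rw [mem_perms] at hl
    have hbound : ∀ i : Fin n, l.get (Fin.cast hlen.symm i) < n := fun i => by
      have hmem : l.get (Fin.cast hlen.symm i) ∈ l :=
        l.get_mem (Fin.cast hlen.symm i)
      have := (hl.2 _).1 hmem
      simpa [Finset.mem_range] using this
    have hinj : Function.Injective (fun i : Fin n =>
        (⟨l.get (Fin.cast hlen.symm i), hbound i⟩ : Fin n)) := by
      intro a b hab
      have h1 : l.get (Fin.cast hlen.symm a) = l.get (Fin.cast hlen.symm b) :=
        congrArg Fin.val hab
      have h2 := List.nodup_iff_injective_get.1 hl.1 h1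
      have h3 := congrArg Fin.val h2
      exact Fin.ext (by simpa using h3)
    refine ⟨Equiv.ofBijective _ (Finite.injective_iff_bijective.1 hinj), Finset.mem_univ _, ?_⟩
    refine List.ext_get (by simp [hlen]) fun k h1 h2 => ?_
    simp [List.get_ofFn, Equiv.ofBijective_apply]
  · intro σ _; rfl

lemma qc_mem_range (n : ℕ) (σ : Equiv.Perm (Fin n)) :
    qsortComparisons (List.ofFn fun i => ((σ i : ℕ))) ∈ Finset.range (n * n + 1) := by
  rw [Finset.mem_range]
  have h := qc_le_sq (List.ofFn fun i => ((σ i : ℕ)))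
  rw [List.length_ofFn, pow_two] at h
  omega

lemma Gq_eq (n : ℕ) (z : ℝ) : Gq n z = Fs z (Finset.range n) / (n.factorial : ℝ) := by
  rw [Gq, ← sum_perm z n, ← Finset.sum_div]
  congr 1
  rw [← Finset.sum_fiberwise_of_maps_to (fun σ _ => qc_mem_range n σ)
    (fun σ => z ^ qsortComparisons (List.ofFn fun i => ((σ i : ℕ))))]
  refine Finset.sum_congr rfl fun k _ => ?_
  rw [qsortPermCount]
  rw [Finset.sum_congr rfl (fun σ hσ => by rw [(Finset.mem_filter.1 hσ).2] :
    ∀ σ ∈ Finset.univ.filter (fun σ : Equiv.Perm (Fin n) =>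
      qsortComparisons (List.ofFn fun i => ((σ i : ℕ))) = k),
      z ^ qsortComparisons (List.ofFn fun i => ((σ i : ℕ))) = z ^ k),
    Finset.sum_const, nsmul_eq_mul]

lemma Gq_rec (z : ℝ) (n : ℕ) :
    Gq (n + 1) z * ((n : ℝ) + 1) =
      ∑ ij ∈ Finset.HasAntidiagonal.antidiagonal n, (Gq ij.1 z * z ^ ij.1) * (Gq ij.2 z * z ^ ij.2) := by
  rw [Finset.Nat.sum_antidiagonal_eq_sum_range_succ_mk, Gq_eq, Fs_range_succ,
    Finset.sum_div, Finset.sum_mul]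
  refine Finset.sum_congr rfl fun v hv => ?_
  rw [Finset.mem_range] at hv
  have hvn : v ≤ n := by omega
  rw [Gq_eq, Gq_eq]
  have hchoose : (n.choose v : ℝ) * (v.factorial : ℝ) * ((n - v).factorial : ℝ)
      = (n.factorial : ℝ) := by
    exact_mod_cast congrArg (Nat.cast : ℕ → ℝ)
      (Nat.choose_mul_factorial_mul_factorial hvn)
  have hz : z ^ v * z ^ (n - v) = z ^ n := by
    rw [← pow_add]
    congr 1
    omega
  have hfact : ((n + 1).factorial : ℝ) = (n.factorial : ℝ) * ((n : ℝ) + 1) := by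
    rw [Nat.factorial_succ]
    push_cast
    ring
  have h1 : ((n + 1).factorial : ℝ) ≠ 0 := Nat.cast_ne_zero.2 (Nat.factorial_ne_zero _)
  have h2 : ((v).factorial : ℝ) ≠ 0 := Nat.cast_ne_zero.2 (Nat.factorial_ne_zero _)
  have h3 : (((n - v)).factorial : ℝ) ≠ 0 := Nat.cast_ne_zero.2 (Nat.factorial_ne_zero _)
  have h4 : ((n).factorial : ℝ) ≠ 0 := Nat.cast_ne_zero.2 (Nat.factorial_ne_zero _)
  field_simp
  rw [hfact]
  linear_combination ((n : ℝ) + 1) * Fs z (Finset.range v) * Fs z (Finset.range (n - v)) * z ^ n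
      * hchoose -
    ((n : ℝ) + 1) * Fs z (Finset.range v) * Fs z (Finset.range (n - v)) * (n.factorial : ℝ) * hz

end QsAux

namespace QsAux

lemma Gq_one (n : ℕ) : Gq n 1 = 1 := by
  unfold Gq
  simp only [one_pow, mul_one]
  rw [← Finset.sum_div]
  have hcard := Finset.card_eq_sum_card_fiberwise (s := (Finset.univ : Finset (Equiv.Perm (Fin n))))
    (t := Finset.range (n * n + 1)) (fun σ _ => qc_mem_range n σ)
  have huniv : (Finset.univ : Finset (Equiv.Perm (Fin n))).card = n.factorial := by
    rw [Finset.card_univ, Fintype.card_perm, Fintype.card_fin]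
  rw [huniv] at hcard
  have hq : ∀ k, (Finset.filter (fun σ : Equiv.Perm (Fin n) =>
      qsortComparisons (List.ofFn fun i => ((σ i : ℕ))) = k) Finset.univ).card
      = qsortPermCount n k := fun _ => rfl
  simp only [hq] at hcard
  have hsum : ∑ k ∈ Finset.range (n * n + 1), (qsortPermCount n k : ℝ) = (n.factorial : ℝ) := by
    exact_mod_cast hcard.symm
  rw [hsum, div_self (Nat.cast_ne_zero.2 (Nat.factorial_ne_zero n))]

end QsAux

open PowerSeries in
theorem stmt17 :
    (∀ z : ℝ, d⁄dX ℝ (mk fun n => Gq n z) = (mk fun n => Gq n z * z ^ n) ^ 2)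
    ∧ (mk fun n => Gq n 1) = (1 - X : PowerSeries ℝ)⁻¹ := by
  constructor
  · intro z
    ext n
    rw [PowerSeries.coeff_derivative, PowerSeries.coeff_mk, sq, PowerSeries.coeff_mul]
    simp only [PowerSeries.coeff_mk]
    exact QsAux.Gq_rec z n
  · symm
    rw [PowerSeries.inv_eq_iff_mul_eq_one (by simp)]
    ext k
    rw [mul_sub, mul_one, map_sub]
    cases k with
    | zero => simp [QsAux.Gq_one]
    | succ k => simp [QsAux.Gq_one, PowerSeries.coeff_succ_mul_X, PowerSeries.coeff_one]
end
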